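/- arXiv:math/0611194 — 3 statements merged into one kernel-verified Lean document; each statement's English description precedes it below -/
import Mathlib

section
/- Let α_•(p) and α_∘(p) be as above for p ∈ (0,1/3). Then the alternating geometric sum (1/α_•)/(1/α_• + 1/α_∘) · Σ_{n≥1} (1 - α_•)^{n-1}·(-1)^n equals -p/(1 + 3p). -/
/-!
With `s = √(1 + 2p - 3p²)` and `N = s - 1 + p`, the weight `(1/α_•)/(1/α_• + 1/α_∘)` only sees the
denominators of `α_• = N/(2p)` and `α_∘ = N/(1 + p + s)`, so it equals `2p/(1 + 3p + s)`. The
geometric series sums to `-1/(2 - α_•) = -2p/(1 + 3p - s)`, and the product of the two is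
`-4p²/((1 + 3p)² - s²) = -p/(1 + 3p)` because `s² = (1 - p)(1 + 3p)`.
-/

theorem tsum_pow_mul_neg_one_pow_succ {r : ℝ} (hr : |r| < 1) :
    ∑' n : ℕ, r ^ n * (-1 : ℝ) ^ (n + 1) = -(1 + r)⁻¹ := by
  have hgeom := tsum_geometric_of_abs_lt_one (r := -r) (by rwa [abs_neg])
  rw [sub_neg_eq_add] at hgeom
  rw [← hgeom, ← tsum_neg]
  congr 1 with n
  rw [neg_pow, pow_succ]
  ring

theorem one_div_div_add_one_div_div {N a b : ℝ} (hN : N ≠ 0) :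
    (1 / (N / a)) / (1 / (N / a) + 1 / (N / b)) = a / (a + b) := by
  rw [one_div_div, one_div_div, ← add_div, div_div_div_cancel_right₀ hN]

theorem one_sub_lt_sqrt_one_add_two_mul_sub_three_mul_sq {p : ℝ} (hp0 : 0 < p) (hp1 : p < 1) :
    1 - p < √(1 + 2 * p - 3 * p ^ 2) :=
  Real.lt_sqrt_of_sq_lt (by nlinarith)

theorem sqrt_one_add_two_mul_sub_three_mul_sq_lt {p : ℝ} (hp0 : 0 < p) :
    √(1 + 2 * p - 3 * p ^ 2) < 1 + 3 * p :=
  (Real.sqrt_lt' (by linarith)).2 (by nlinarith)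

/-- The index shift `n ↦ n+1` turns `Σ_{n≥1} (1-α_•)^{n-1} (-1)^n` into
`Σ'_{n:ℕ} (1-α_•)^n (-1)^{n+1}`. -/
theorem stmt7 (p : ℝ) (hp : p ∈ Set.Ioo (0:ℝ) (1/3))
    (αb αo : ℝ)
    (hαb : αb = (-1 + p + Real.sqrt (1 + 2*p - 3*p^2)) / (2*p))
    (hαo : αo = (-1 + p + Real.sqrt (1 + 2*p - 3*p^2)) / (1 + p + Real.sqrt (1 + 2*p - 3*p^2))) :
    (1/αb) / (1/αb + 1/αo) * (∑' n : ℕ, (1 - αb)^n * (-1 : ℝ)^(n+1)) = -p / (1 + 3*p) := by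
  obtain ⟨hp0, hp3⟩ := hp
  have hp1 : p < 1 := by linarith
  set s := √(1 + 2 * p - 3 * p ^ 2)
  have hs_lower : 1 - p < s := one_sub_lt_sqrt_one_add_two_mul_sub_three_mul_sq hp0 hp1
  have hs_upper : s < 1 + 3 * p := sqrt_one_add_two_mul_sub_three_mul_sq_lt hp0
  have hs_sq : s ^ 2 = 1 + 2 * p - 3 * p ^ 2 := Real.sq_sqrt (by nlinarith)
  have hαb_pos : 0 < αb := by rw [hαb]; exact div_pos (by linarith) (by linarith)
  have hαb_lt : αb < 2 := by rw [hαb, div_lt_iff₀ (by linarith)]; linarith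
  have hweight : (1 / αb) / (1 / αb + 1 / αo) = 2 * p / (1 + 3 * p + s) := by
    rw [hαb, hαo, one_div_div_add_one_div_div (by linarith)]
    ring_nf
  have hseries : ∑' n : ℕ, (1 - αb) ^ n * (-1 : ℝ) ^ (n + 1) = -(2 * p / (1 + 3 * p - s)) := by
    rw [tsum_pow_mul_neg_one_pow_succ (abs_lt.2 ⟨by linarith, by linarith⟩), hαb]
    congr 1
    field_simp
    ring
  rw [hweight, hseries]
  have hdenom : (1 + 3 * p + s) * (1 + 3 * p - s) = 4 * p * (1 + 3 * p) := by
    linear_combination -hs_sq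
  rw [mul_neg, div_mul_div_comm, hdenom]
  field_simp
  ring
end

section
/- Let T be a finite rooted plane tree and define D(T) = Σ_{T' rooted subtree of T containing the root} (-1)^{|T'|+1} (sum over all subtrees T' of T that contain the root and are closed under taking parents). Then D(T) = χ_root(T), where χ is defined by χ_v = ∏_{c child of v in T}(1 - χ_c) with empty product 1. In particular D(T) ∈ {0,1}. -/
section Helpers

open Finset Relation

variable {V : Type*} [Fintype V] [DecidableEq V]

open Classical in
private lemma closure_chain (parent : V → Option V) (S : Finset V)
    (hS : ∀ u ∈ S, ∀ w, parent u = some w → w ∈ S)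
    {x y : V} (h : ReflTransGen (fun a b => parent a = some b) x y) (hx : x ∈ S) : y ∈ S := by
  induction h with
  | refl => exact hx
  | tail h' hstep ih => exact hS _ ih _ hstep

open Classical in
private lemma desc_ssubset (parent : V → Option V)
    (hacyc : ∀ v, ¬ TransGen (fun a b => parent a = some b) v v)
    (D : Finset V) {c v : V} (hv : v ∈ D) (hpc : parent c = some v) :
    D.filter (fun x => ReflTransGen (fun a b => parent a = some b) x c) ⊂
      D.filter (fun x => ReflTransGen (fun a b => parent a = some b) x v) := by
  constructor
  · intro x hx
    simp only [Finset.mem_filter] at hx ⊢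
    exact ⟨hx.1, hx.2.trans (ReflTransGen.single hpc)⟩
  · intro hsub
    have hvmem : v ∈ D.filter (fun x => ReflTransGen (fun a b => parent a = some b) x v) :=
      Finset.mem_filter.mpr ⟨hv, ReflTransGen.refl⟩
    have := hsub hvmem
    simp only [Finset.mem_filter] at this
    exact hacyc c (TransGen.head' hpc this.2)

open Classical in
private lemma root_only (parent : V → Option V) (root : V)
    (hroot : parent root = none)
    {u : V} (h : ReflTransGen (fun a b => parent a = some b) root u) : u = root := by
  rcases h.cases_head with h | ⟨b, hb, _⟩
  · exact h.symm
  · rw [hroot] at hb; exact absurd hb (by simp)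

open Classical in
private lemma exists_leaf (parent : V → Option V)
    (hacyc : ∀ v, ¬ TransGen (fun a b => parent a = some b) v v)
    (D : Finset V) {u : V} (hu : u ∈ D) :
    ∃ ℓ ∈ D, ReflTransGen (fun a b => parent a = some b) ℓ u ∧
      ∀ c ∈ D, parent c ≠ some ℓ := by
  have hC : (D.filter (fun w => ReflTransGen (fun a b => parent a = some b) w u)).Nonempty :=
    ⟨u, Finset.mem_filter.mpr ⟨hu, ReflTransGen.refl⟩⟩
  obtain ⟨ℓ, hℓ, hmin⟩ := Finset.exists_min_image _
    (fun w => (D.filter (fun x => ReflTransGen (fun a b => parent a = some b) x w)).card) hC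
  simp only [Finset.mem_filter] at hℓ
  refine ⟨ℓ, hℓ.1, hℓ.2, ?_⟩
  intro c hc hpc
  have hcu : ReflTransGen (fun a b => parent a = some b) c u := ReflTransGen.head hpc hℓ.2
  have hle := hmin c (Finset.mem_filter.mpr ⟨hc, hcu⟩)
  exact absurd (Finset.card_lt_card (desc_ssubset parent hacyc D hℓ.1 hpc)) (not_lt.mpr hle)

open Classical in
private lemma chi01 (parent : V → Option V)
    (hacyc : ∀ v, ¬ TransGen (fun a b => parent a = some b) v v)
    (χ : V → ℤ)
    (hχ : ∀ v, χ v = ∏ c ∈ Finset.univ.filter (fun u => parent u = some v), (1 - χ c)) :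
    ∀ n (v : V),
      (Finset.univ.filter (fun x => ReflTransGen (fun a b => parent a = some b) x v)).card ≤ n →
      χ v = 0 ∨ χ v = 1 := by
  intro n
  induction n with
  | zero =>
    intro v hv
    have h0 : 0 < (Finset.univ.filter
        (fun x => ReflTransGen (fun a b => parent a = some b) x v)).card :=
      Finset.card_pos.mpr ⟨v, Finset.mem_filter.mpr ⟨Finset.mem_univ v, ReflTransGen.refl⟩⟩
    omega
  | succ n ih =>
    intro v hv
    rw [hχ v]
    refine Finset.prod_induction _ (fun x => x = 0 ∨ x = 1) ?_ (Or.inr rfl) ?_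
    · rintro a b (rfl | rfl) (rfl | rfl) <;> simp
    · intro c hc
      simp only [Finset.mem_filter] at hc
      have hlt := Finset.card_lt_card (desc_ssubset parent hacyc Finset.univ (Finset.mem_univ v) hc.2)
      rcases ih c (by omega) with h | h <;> rw [h] <;> simp

open Classical in
private lemma main_lemma (parent : V → Option V) (root : V)
    (hroot : parent root = none)
    (hacyc : ∀ v, ¬ TransGen (fun a b => parent a = some b) v v)
    (hconn : ∀ v, ReflTransGen (fun a b => parent a = some b) v root) :
    ∀ n (D : Finset V), D.card ≤ n → root ∈ D →
      (∀ u ∈ D, ∀ w, parent u = some w → w ∈ D) →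
      ∀ χ : V → ℤ,
      (∀ v ∈ D, χ v = ∏ c ∈ D.filter (fun u => parent u = some v), (1 - χ c)) →
      (∑ S ∈ D.powerset.filter
          (fun S => root ∈ S ∧ ∀ u ∈ S, ∀ w, parent u = some w → w ∈ S),
        (-1 : ℤ) ^ (S.card + 1)) = χ root := by
  intro n
  induction n with
  | zero =>
    intro D hcard hrD _ _ _
    have h0 : 0 < D.card := Finset.card_pos.mpr ⟨root, hrD⟩
    omega
  | succ n ih =>
    intro D hcard hrD hclosed χ hχ
    by_cases hsingle : ∀ u ∈ D, u = root
    · -- D = {root}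
      have hDeq : D = {root} := by
        apply Finset.eq_singleton_iff_unique_mem.mpr ⟨hrD, hsingle⟩
      subst hDeq
      have hfilt : ({root} : Finset V).powerset.filter
          (fun S => root ∈ S ∧ ∀ u ∈ S, ∀ w, parent u = some w → w ∈ S) = {({root} : Finset V)} := by
        ext S
        simp only [Finset.mem_filter, Finset.mem_powerset, Finset.mem_singleton,
          Finset.subset_singleton_iff]
        constructor
        · rintro ⟨rfl | rfl, hr, _⟩
          · exact absurd hr (by simp)
          · rfl
        · rintro rfl
          refine ⟨Or.inr rfl, Finset.mem_singleton_self root, ?_⟩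
          intro u hu w hw
          rw [Finset.mem_singleton] at hu
          subst hu
          rw [hroot] at hw
          exact absurd hw (by simp)
      rw [hfilt, Finset.sum_singleton, Finset.card_singleton]
      have : ({root} : Finset V).filter (fun u => parent u = some root) = ∅ := by
        ext c
        simp only [Finset.mem_filter, Finset.mem_singleton, Finset.notMem_empty, iff_false]
        rintro ⟨rfl, hc⟩
        rw [hroot] at hc
        exact absurd hc (by simp)
      rw [hχ root (Finset.mem_singleton_self root), this, Finset.prod_empty]
      norm_num
    · push_neg at hsingle
      obtain ⟨u, huD, hur⟩ := hsingle
      obtain ⟨ℓ, hℓD, hℓu, hleaf⟩ := exists_leaf parent hacyc D huD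
      have hℓr : ℓ ≠ root := by
        intro h
        rw [h] at hℓu
        exact hur (root_only parent root hroot hℓu)
      obtain ⟨p, hp⟩ : ∃ p, parent ℓ = some p := by
        rcases (hconn ℓ).cases_head with h | ⟨b, hb, _⟩
        · exact absurd h hℓr
        · exact ⟨b, hb⟩
      have hpD : p ∈ D := hclosed ℓ hℓD p hp
      have hχℓ : χ ℓ = 1 := by
        rw [hχ ℓ hℓD]
        have : D.filter (fun u => parent u = some ℓ) = ∅ := by
          ext c
          simp only [Finset.mem_filter, Finset.notMem_empty, iff_false]
          rintro ⟨hc1, hc2⟩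
          exact hleaf c hc1 hc2
        rw [this, Finset.prod_empty]
      have hχp : χ p = 0 := by
        rw [hχ p hpD]
        exact Finset.prod_eq_zero (Finset.mem_filter.mpr ⟨hℓD, hp⟩) (by rw [hχℓ]; ring)
      have hℓp : ℓ ≠ p := by
        rintro rfl
        exact hacyc ℓ (TransGen.single hp)
      -- split the sum by whether p ∈ S
      rw [← Finset.sum_filter_add_sum_filter_not (D.powerset.filter
          (fun S => root ∈ S ∧ ∀ u ∈ S, ∀ w, parent u = some w → w ∈ S)) (fun S => p ∈ S)]
      have hgmem : ∀ S ∈ ((D.powerset.filter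
          (fun S => root ∈ S ∧ ∀ u ∈ S, ∀ w, parent u = some w → w ∈ S)).filter
            (fun S => p ∈ S)),
          (if ℓ ∈ S then S.erase ℓ else insert ℓ S) ∈ ((D.powerset.filter
          (fun S => root ∈ S ∧ ∀ u ∈ S, ∀ w, parent u = some w → w ∈ S)).filter
            (fun S => p ∈ S)) := by
        intro S hS
        simp only [Finset.mem_filter, Finset.mem_powerset] at hS
        obtain ⟨⟨hSD, hrS, hSc⟩, hpS⟩ := hS
        by_cases hls : ℓ ∈ S
        · rw [if_pos hls]
          refine Finset.mem_filter.mpr ⟨Finset.mem_filter.mpr ⟨Finset.mem_powerset.mpr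
            ((Finset.erase_subset ℓ S).trans hSD),
            Finset.mem_erase.mpr ⟨fun h => hℓr h.symm, hrS⟩, ?_⟩,
            Finset.mem_erase.mpr ⟨fun h => hℓp h.symm, hpS⟩⟩
          intro v hv w hw
          have hvS : v ∈ S := Finset.mem_of_mem_erase hv
          have hwS : w ∈ S := hSc v hvS w hw
          refine Finset.mem_erase.mpr ⟨?_, hwS⟩
          rintro rfl
          exact hleaf v (hSD hvS) hw
        · rw [if_neg hls]
          refine Finset.mem_filter.mpr ⟨Finset.mem_filter.mpr ⟨Finset.mem_powerset.mpr ?_,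
            Finset.mem_insert_of_mem hrS, ?_⟩, Finset.mem_insert_of_mem hpS⟩
          · intro x hx
            rcases Finset.mem_insert.mp hx with rfl | hx
            · exact hℓD
            · exact hSD hx
          · intro v hv w hw
            rcases Finset.mem_insert.mp hv with rfl | hv
            · rw [hp] at hw
              injection hw with hw
              subst hw
              exact Finset.mem_insert_of_mem hpS
            · exact Finset.mem_insert_of_mem (hSc v hv w hw)
      have part1 : (∑ S ∈ ((D.powerset.filter
          (fun S => root ∈ S ∧ ∀ u ∈ S, ∀ w, parent u = some w → w ∈ S)).filter
            (fun S => p ∈ S)), (-1 : ℤ) ^ (S.card + 1)) = 0 := by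
        refine Finset.sum_involution (fun S _ => if ℓ ∈ S then S.erase ℓ else insert ℓ S)
          ?_ ?_ hgmem ?_
        · -- sums cancel
          intro S hS
          by_cases hls : ℓ ∈ S
          · simp only [if_pos hls]
            rw [Finset.card_erase_of_mem hls]
            have h1 : 1 ≤ S.card := Finset.card_pos.mpr ⟨ℓ, hls⟩
            have h2 : S.card - 1 + 1 = S.card := by omega
            rw [h2]
            have h3 : S.card = (S.card - 1) + 1 := by omega
            rw [h3, pow_succ]
            ring
          · simp only [if_neg hls]
            rw [Finset.card_insert_of_notMem hls]
            rw [pow_succ, pow_succ]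
            ring
        · -- g S ≠ S
          intro S hS hf
          by_cases hls : ℓ ∈ S
          · simp only [if_pos hls]
            intro h
            rw [← h] at hls
            exact (Finset.notMem_erase ℓ S) hls
          · simp only [if_neg hls]
            intro h
            exact hls (h ▸ Finset.mem_insert_self ℓ S)
        · -- involution
          intro S hS
          by_cases hls : ℓ ∈ S
          · have h1 : ℓ ∉ S.erase ℓ := Finset.notMem_erase ℓ S
            simp only [if_pos hls, if_neg h1, Finset.insert_erase hls]
          · have h2 : ℓ ∈ insert ℓ S := Finset.mem_insert_self ℓ S
            simp only [if_neg hls, if_pos h2, Finset.erase_insert hls]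
      rw [part1, zero_add]
      by_cases hpr : p = root
      · have hempty : ((D.powerset.filter
            (fun S => root ∈ S ∧ ∀ u ∈ S, ∀ w, parent u = some w → w ∈ S)).filter
              (fun S => p ∉ S)) = ∅ := by
          ext S
          simp only [Finset.mem_filter, Finset.mem_powerset, Finset.notMem_empty, iff_false]
          rintro ⟨⟨_, hrS, _⟩, hpS⟩
          exact hpS (hpr ▸ hrS)
        rw [hempty, Finset.sum_empty, ← hpr, hχp]
      · obtain ⟨q, hq⟩ : ∃ q, parent p = some q := by
          rcases (hconn p).cases_head with h | ⟨b, hb, _⟩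
          · exact absurd h hpr
          · exact ⟨b, hb⟩
        have hqp : ¬ ReflTransGen (fun a b => parent a = some b) q p := by
          intro h
          exact hacyc p (TransGen.head' hq h)
        set D' := D.filter (fun x => ¬ ReflTransGen (fun a b => parent a = some b) x p) with hD'
        have hpD' : p ∉ D' := by
          simp only [hD', Finset.mem_filter, not_and, not_not]
          intro _
          exact ReflTransGen.refl
        have hrD' : root ∈ D' := by
          refine Finset.mem_filter.mpr ⟨hrD, ?_⟩
          intro h
          exact hpr (root_only parent root hroot h)
        have hclosed' : ∀ u ∈ D', ∀ w, parent u = some w → w ∈ D' := by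
          intro v hv w hw
          simp only [hD', Finset.mem_filter] at hv ⊢
          refine ⟨hclosed v hv.1 w hw, ?_⟩
          intro h
          exact hv.2 (ReflTransGen.head hw h)
        have hcard' : D'.card ≤ n := by
          have hss : D' ⊂ D := Finset.ssubset_iff_of_subset (Finset.filter_subset _ D) |>.mpr
            ⟨p, hpD, hpD'⟩
          have := Finset.card_lt_card hss
          omega
        have hχ' : ∀ v ∈ D', χ v = ∏ c ∈ D'.filter (fun u => parent u = some v), (1 - χ c) := by
          intro v hv
          have hvD : v ∈ D := Finset.mem_filter.mp hv |>.1
          have hvp : ¬ ReflTransGen (fun a b => parent a = some b) v p :=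
            (Finset.mem_filter.mp hv).2
          by_cases hvq : v = q
          · subst hvq
            have hsplit : D.filter (fun u => parent u = some v) =
                insert p (D'.filter (fun u => parent u = some v)) := by
              ext c
              simp only [Finset.mem_filter, Finset.mem_insert, hD']
              constructor
              · rintro ⟨hcD, hcq⟩
                by_cases hcp : c = p
                · exact Or.inl hcp
                · refine Or.inr ⟨⟨hcD, ?_⟩, hcq⟩
                  intro h
                  rcases h.cases_head with h | ⟨b, hb, hbp⟩
                  · exact hcp h
                  · rw [hcq] at hb
                    injection hb with hb
                    subst hb
                    exact hqp hbp
              · rintro (rfl | ⟨⟨hcD, _⟩, hcq⟩)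
                · exact ⟨hpD, hq⟩
                · exact ⟨hcD, hcq⟩
            have hpnot : p ∉ D'.filter (fun u => parent u = some v) := by
              intro h
              exact hpD' (Finset.mem_filter.mp h).1
            rw [hχ v hvD, hsplit, Finset.prod_insert hpnot, hχp]
            ring
          · have hsame : D.filter (fun u => parent u = some v) =
                D'.filter (fun u => parent u = some v) := by
              ext c
              simp only [Finset.mem_filter, hD']
              constructor
              · rintro ⟨hcD, hcv⟩
                refine ⟨⟨hcD, ?_⟩, hcv⟩
                intro h
                rcases h.cases_head with h | ⟨b, hb, hbp⟩
                · subst h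
                  rw [hq] at hcv
                  injection hcv with hcv
                  exact hvq hcv.symm
                · rw [hcv] at hb
                  injection hb with hb
                  subst hb
                  exact hvp hbp
              · rintro ⟨⟨hcD, _⟩, hcv⟩
                exact ⟨hcD, hcv⟩
            rw [hχ v hvD, hsame]
        have hseteq : ((D.powerset.filter
            (fun S => root ∈ S ∧ ∀ u ∈ S, ∀ w, parent u = some w → w ∈ S)).filter
              (fun S => p ∉ S)) = D'.powerset.filter
            (fun S => root ∈ S ∧ ∀ u ∈ S, ∀ w, parent u = some w → w ∈ S) := by
          ext S
          simp only [Finset.mem_filter, Finset.mem_powerset]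
          constructor
          · rintro ⟨⟨hSD, hrS, hSc⟩, hpS⟩
            refine ⟨?_, hrS, hSc⟩
            intro x hx
            refine Finset.mem_filter.mpr ⟨hSD hx, ?_⟩
            intro h
            exact hpS (closure_chain parent S hSc h hx)
          · rintro ⟨hSD', hrS, hSc⟩
            refine ⟨⟨hSD'.trans (Finset.filter_subset _ D), hrS, hSc⟩, ?_⟩
            intro hpS
            exact hpD' (hSD' hpS)
        rw [hseteq]
        exact ih D' hcard' hrD' hclosed' χ hχ'

end Helpers


open Classical in
/-- Theorem 2.11 specialized to a finite tree: the alternating sum `D(T)` over rooted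
subtrees of `T` containing the root equals `χ_root(T)`, where
`χ_v = ∏_{c child of v} (1 - χ_c)`; in particular `D(T) ∈ {0,1}`. -/
theorem stmt16 {V : Type*} [Fintype V] [DecidableEq V]
    (parent : V → Option V) (root : V)
    (hroot : parent root = none)
    (hacyc : ∀ v : V, ¬ Relation.TransGen (fun a b => parent a = some b) v v)
    (hconn : ∀ v : V, Relation.ReflTransGen (fun a b => parent a = some b) v root)
    (χ : V → ℤ)
    (hχ : ∀ v, χ v = ∏ c ∈ Finset.univ.filter (fun u => parent u = some v), (1 - χ c)) :
    (∑ S ∈ Finset.univ.powerset.filter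
        (fun S : Finset V => root ∈ S ∧ ∀ u ∈ S, ∀ w, parent u = some w → w ∈ S),
      (-1 : ℤ) ^ (S.card + 1)) = χ root ∧
    (χ root = 0 ∨ χ root = 1) := by
  constructor
  · exact main_lemma parent root hroot hacyc hconn (Finset.univ.card) Finset.univ le_rfl
      (Finset.mem_univ root) (fun u _ w _ => Finset.mem_univ w) χ (fun v _ => hχ v)
  · exact chi01 parent hacyc χ hχ (Finset.univ.card) root (Finset.card_le_univ _)
end

section
/- Let G be an agreeable graph and A a finite directed animal with a single-vertex source {v}, where v has children v₁,…,v_d in G. Let A^{v_i} denote the maximal sub-animal of A with source v_i, and define Δ_v(A) = Σ_{t tree embeddable in G at v with π_v(t) a sub-animal of A} (-1)^{|t|+1}. Then Δ satisfies Δ_v(A) = 𝟙[|A|>0]·∏_{i=1}^d (1 - Δ_{v_i}(A^{v_i})). -/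
/-- Following the child-indices of the word `w` from the vertex `v` in the graph given by
the ordered child-lists `children`; `none` if some index is out of range. -/
def vertexAt {V : Type*} (children : V → List V) : V → List ℕ → Option V
  | v, [] => some v
  | v, i :: w =>
    match (children v)[i]? with
    | some c => vertexAt children c w
    | none => none

/-- `t` is a tree in Neveu-like encoding: a set of finite words over ℕ containing the empty
word and closed under removing the last letter. -/
def IsWordTree (t : Finset (List ℕ)) : Prop :=
  ([] : List ℕ) ∈ t ∧ ∀ w ∈ t, w.dropLast ∈ t

open Classical in
/-- `Delta children v A = Σ_t (-1)^{|t|+1}`, summed over the trees `t` embeddable in the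
graph at `v` whose embedding `π_v(t)` is a sub-animal of `A`. -/
noncomputable def Delta {V : Type*} (children : V → List V) (v : V) (A : Finset V) : ℝ :=
  ∑' t : {t : Finset (List ℕ) // IsWordTree t ∧
      ∀ w ∈ t, ∃ u ∈ A, vertexAt children v w = some u},
    (-1 : ℝ) ^ (t.1.card + 1)

open Classical in
/-- The maximal sub-animal of `A` with over-source `c`. -/
noncomputable def maxSubA {V : Type*} [DecidableEq V] (children : V → List V)
    (A : Finset V) (c : V) : Finset V :=
  if c ∈ A then
    A.filter (fun u => Relation.ReflTransGen (fun a b => b ∈ A ∧ b ∈ children a) c u)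
  else ∅

namespace Stmt19
variable {V : Type*} {children : V → List V}

lemma vertexAt_nil (v : V) : vertexAt children v [] = some v := rfl

lemma vertexAt_cons (v : V) (i : ℕ) (w : List ℕ) :
    vertexAt children v (i :: w) = ((children v)[i]?).bind fun c => vertexAt children c w := by
  cases h : (children v)[i]? <;> simp [vertexAt, h]

lemma wordTree_prefix_mem {t : Finset (List ℕ)} (ht : IsWordTree t) :
    ∀ w₂ w₁, w₁ ++ w₂ ∈ t → w₁ ∈ t := by
  intro w₂
  induction w₂ using List.reverseRecOn with
  | nil => intro w₁ h; simpa using h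
  | append_singleton ys y ih =>
    intro w₁ h
    apply ih
    have := ht.2 _ h
    rwa [← List.append_assoc, List.dropLast_concat] at this

lemma transGen_of_vertexAt {u u' : V} {w : List ℕ} (hw : w ≠ [])
    (h : vertexAt children u w = some u') :
    Relation.TransGen (fun a b => b ∈ children a) u u' := by
  induction w generalizing u with
  | nil => exact absurd rfl hw
  | cons i w ih =>
    rw [vertexAt_cons] at h
    rcases hc : (children u)[i]? with _ | c
    · rw [hc] at h; simp at h
    · rw [hc, Option.bind_some] at h
      have hmem : c ∈ children u := List.mem_of_getElem? hc
      rcases eq_or_ne w [] with rfl | hw'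
      · rw [vertexAt_nil, Option.some_inj] at h
        exact h ▸ Relation.TransGen.single hmem
      · exact (Relation.TransGen.single hmem).trans (ih hw' h)

lemma reflTransGen_of_vertexAt {A : Finset V} {u z : V} {w : List ℕ}
    (h : vertexAt children u w = some z)
    (hpref : ∀ n, ∃ x ∈ A, vertexAt children u (w.take n) = some x) :
    Relation.ReflTransGen (fun a b => b ∈ A ∧ b ∈ children a) u z := by
  induction w generalizing u with
  | nil =>
    rw [vertexAt_nil, Option.some_inj] at h
    exact h ▸ Relation.ReflTransGen.refl
  | cons i w ih =>
    rw [vertexAt_cons] at h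
    rcases hc : (children u)[i]? with _ | c
    · rw [hc] at h; simp at h
    · rw [hc, Option.bind_some] at h
      have hcA : c ∈ A := by
        obtain ⟨x, hx, hvx⟩ := hpref 1
        rw [List.take_succ_cons, List.take_zero, vertexAt_cons, hc, Option.bind_some,
          vertexAt_nil, Option.some_inj] at hvx
        exact hvx ▸ hx
      refine Relation.ReflTransGen.head ⟨hcA, List.mem_of_getElem? hc⟩ (ih h ?_)
      intro n
      obtain ⟨x, hx, hvx⟩ := hpref (n + 1)
      rw [List.take_succ_cons, vertexAt_cons, hc, Option.bind_some] at hvx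
      exact ⟨x, hx, hvx⟩

lemma letters_lt {B : Finset V} {u : V} {w : List ℕ} {z : V}
    (h : vertexAt children u w = some z)
    (hpref : ∀ n, ∃ x ∈ B, vertexAt children u (w.take n) = some x) :
    ∀ i ∈ w, i < B.sup fun x => (children x).length := by
  induction w generalizing u with
  | nil => simp
  | cons j w ih =>
    have huB : u ∈ B := by
      obtain ⟨x, hx, hvx⟩ := hpref 0
      rw [List.take_zero, vertexAt_nil, Option.some_inj] at hvx
      exact hvx ▸ hx
    rw [vertexAt_cons] at h
    rcases hc : (children u)[j]? with _ | c
    · rw [hc] at h; simp at h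
    · rw [hc, Option.bind_some] at h
      have hj : j < (children u).length := by
        by_contra hle
        rw [List.getElem?_eq_none (le_of_not_gt hle)] at hc
        exact nomatch hc
      intro i hi
      rcases List.mem_cons.1 hi with rfl | hi
      · exact lt_of_lt_of_le hj (Finset.le_sup (f := fun x => (children x).length) huB)
      · refine ih h ?_ i hi
        intro n
        obtain ⟨x, hx, hvx⟩ := hpref (n + 1)
        rw [List.take_succ_cons, vertexAt_cons, hc, Option.bind_some] at hvx
        exact ⟨x, hx, hvx⟩


lemma vertexAt_append (v : V) (w₁ w₂ : List ℕ) :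
    vertexAt children v (w₁ ++ w₂)
      = (vertexAt children v w₁).bind fun u => vertexAt children u w₂ := by
  induction w₁ generalizing v with
  | nil => simp [vertexAt_nil]
  | cons i w ih =>
    rw [List.cons_append, vertexAt_cons, vertexAt_cons]
    cases (children v)[i]? <;> simp [ih]

lemma length_lt {B : Finset V}
    (hacyc : ∀ v : V, ¬ Relation.TransGen (fun a b => b ∈ children a) v v)
    {u : V} {w : List ℕ}
    (hpref : ∀ n, ∃ x ∈ B, vertexAt children u (w.take n) = some x) :
    w.length < B.card := by
  classical
  set g : ℕ → V := fun n => (vertexAt children u (w.take n)).getD u with hg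
  have hgB : ∀ n, g n ∈ B := by
    intro n
    obtain ⟨x, hx, hvx⟩ := hpref n
    simp only [hg, hvx, Option.getD_some]
    exact hx
  have key : ∀ m n : ℕ, m < n → n ≤ w.length → g m ≠ g n := by
    intro m n hmn hn heq
    obtain ⟨x, hx, hvx⟩ := hpref m
    obtain ⟨y, hy, hvy⟩ := hpref n
    have hgm : g m = x := by simp [hg, hvx]
    have hgn : g n = y := by simp [hg, hvy]
    have htt : (w.take n).take m = w.take m := by
      rw [List.take_take, min_eq_left (le_of_lt hmn)]
    have hsplit : w.take n = w.take m ++ (w.take n).drop m := by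
      conv_lhs => rw [← List.take_append_drop m (w.take n)]
      rw [htt]
    have hvy' : vertexAt children x ((w.take n).drop m) = some y := by
      rw [hsplit, vertexAt_append, hvx, Option.bind_some] at hvy
      exact hvy
    have hne : (w.take n).drop m ≠ [] := by
      have : ((w.take n).drop m).length = n - m := by
        rw [List.length_drop, List.length_take, min_eq_left hn]
      intro hnil
      rw [hnil] at this
      simp only [List.length_nil] at this
      omega
    have hxy : x = y := by rw [← hgm, ← hgn, heq]
    subst hxy
    exact hacyc x (transGen_of_vertexAt hne hvy')
  have hinj : Set.InjOn g (Finset.range (w.length + 1)) := by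
    intro m hm n hn heq
    simp only [Finset.coe_range, Set.mem_Iio] at hm hn
    rcases lt_trichotomy m n with h | h | h
    · exact absurd heq (key m n h (by omega))
    · exact h
    · exact absurd heq.symm (key n m h (by omega))
  have := Finset.card_le_card_of_injOn g (fun n _ => hgB n) hinj
  simpa using this

lemma emb_finite
    (hacyc : ∀ v : V, ¬ Relation.TransGen (fun a b => b ∈ children a) v v)
    (u : V) (B : Finset V) :
    {t : Finset (List ℕ) | IsWordTree t ∧
      ∀ w ∈ t, ∃ x ∈ B, vertexAt children u w = some x}.Finite := by
  classical
  set L := B.sup fun x => (children x).length with hL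
  have hW : {w : List ℕ | w.length < B.card ∧ ∀ i ∈ w, i < L}.Finite := by
    have h1 : {l : List (Fin (L + 1)) | l.length < B.card}.Finite :=
      List.finite_length_lt _ _
    apply (h1.image (List.map Fin.val)).subset
    rintro w ⟨hlen, hlt⟩
    refine ⟨w.attach.map (fun x => (⟨x.1, Nat.lt_succ_of_lt (hlt x.1 x.2)⟩ : Fin (L + 1))), ?_, ?_⟩
    · simpa using hlen
    · rw [List.map_map]
      simp
  apply Set.Finite.of_finite_image (f := fun t : Finset (List ℕ) => (↑t : Set (List ℕ)))
    _ Finset.coe_injective.injOn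
  apply hW.finite_subsets.subset
  rintro s ⟨t, ⟨ht, hemb⟩, rfl⟩
  intro w hw
  rw [Finset.mem_coe] at hw
  have hpref : ∀ n, ∃ x ∈ B, vertexAt children u (w.take n) = some x := by
    intro n
    exact hemb _ (wordTree_prefix_mem ht (w.drop n) (w.take n)
      (by rw [List.take_append_drop]; exact hw))
  obtain ⟨z, hz, hvz⟩ := hemb w hw
  exact ⟨length_lt hacyc hpref, letters_lt hvz hpref⟩

def subT (i : ℕ) (t : Finset (List ℕ)) : Finset (List ℕ) :=
  (t.filter fun w => w.head? = some i).image List.tail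

lemma mem_subT {i : ℕ} {t : Finset (List ℕ)} {w : List ℕ} :
    w ∈ subT i t ↔ i :: w ∈ t := by
  simp only [subT, Finset.mem_image, Finset.mem_filter]
  constructor
  · rintro ⟨w', ⟨hw', hh⟩, rfl⟩
    cases w' with
    | nil => simp at hh
    | cons a w'' =>
      simp only [List.head?_cons, Option.some_inj] at hh
      subst hh
      exact hw'
  · intro h
    exact ⟨i :: w, ⟨h, rfl⟩, rfl⟩

lemma isWordTree_subT {t : Finset (List ℕ)} (ht : IsWordTree t) {i : ℕ}
    (hi : [i] ∈ t) : IsWordTree (subT i t) := by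
  refine ⟨mem_subT.2 hi, ?_⟩
  intro w hw
  rw [mem_subT] at hw ⊢
  cases w with
  | nil => simpa using hi
  | cons a w' =>
    have h2 := ht.2 _ hw
    simpa using h2

def asm (d : ℕ) (f : Fin d → Finset (List ℕ)) : Finset (List ℕ) :=
  insert [] (Finset.univ.biUnion fun i : Fin d => (f i).image ((i : ℕ) :: ·))

lemma mem_asm {d : ℕ} {f : Fin d → Finset (List ℕ)} {w : List ℕ} :
    w ∈ asm d f ↔ w = [] ∨ ∃ i : Fin d, ∃ w' ∈ f i, w = (i : ℕ) :: w' := by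
  simp only [asm, Finset.mem_insert, Finset.mem_biUnion, Finset.mem_univ, true_and,
    Finset.mem_image]
  constructor
  · rintro (rfl | ⟨i, w', hw', rfl⟩)
    · exact Or.inl rfl
    · exact Or.inr ⟨i, w', hw', rfl⟩
  · rintro (rfl | ⟨i, w', hw', rfl⟩)
    · exact Or.inl rfl
    · exact Or.inr ⟨i, w', hw', rfl⟩

lemma card_asm {d : ℕ} (f : Fin d → Finset (List ℕ)) :
    (asm d f).card = 1 + ∑ i : Fin d, (f i).card := by
  classical
  rw [asm, Finset.card_insert_of_notMem, Finset.card_biUnion, add_comm]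
  · congr 1
    refine Finset.sum_congr rfl fun i _ => ?_
    exact Finset.card_image_of_injective _ (fun a b h => by injection h)
  · intro i _ j _ hij
    simp only [Finset.disjoint_left, Finset.mem_image]
    rintro w ⟨w₁, _, rfl⟩ ⟨w₂, _, heq⟩
    injection heq with h1 _
    exact hij (Fin.val_injective h1.symm)
  · simp only [Finset.mem_biUnion, Finset.mem_univ, true_and, Finset.mem_image, not_exists]
    rintro i w ⟨_, h⟩
    exact nomatch h

variable [DecidableEq V]

lemma maxSubA_subset (A : Finset V) (c : V) : maxSubA children A c ⊆ A := by
  classical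
  rw [maxSubA]
  split
  · exact Finset.filter_subset _ _
  · exact Finset.empty_subset _

lemma subT_emb {v : V} {A : Finset V} {t : Finset (List ℕ)} (ht : IsWordTree t)
    (hemb : ∀ w ∈ t, ∃ x ∈ A, vertexAt children v w = some x)
    (i : Fin (children v).length) {w : List ℕ} (hw : (i : ℕ) :: w ∈ t) :
    ∃ x ∈ maxSubA children A (children v)[i],
      vertexAt children (children v)[i] w = some x := by
  classical
  have hci : (children v)[(i : ℕ)]? = some (children v)[i] := List.getElem?_eq_getElem i.2
  have hstep : ∀ w' : List ℕ, (i : ℕ) :: w' ∈ t →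
      ∃ x ∈ A, vertexAt children (children v)[i] w' = some x := by
    intro w' hw'
    obtain ⟨x, hx, hvx⟩ := hemb _ hw'
    rw [vertexAt_cons, hci, Option.bind_some] at hvx
    exact ⟨x, hx, hvx⟩
  obtain ⟨x, hx, hvx⟩ := hstep w hw
  have hcA : (children v)[i] ∈ A := by
    have h1 : (i : ℕ) :: [] ∈ t := wordTree_prefix_mem ht w [(i : ℕ)] hw
    obtain ⟨y, hy, hvy⟩ := hstep [] h1
    rw [vertexAt_nil, Option.some_inj] at hvy
    exact hvy ▸ hy
  refine ⟨x, ?_, hvx⟩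
  rw [maxSubA, if_pos hcA, Finset.mem_filter]
  refine ⟨hx, reflTransGen_of_vertexAt hvx ?_⟩
  intro n
  exact hstep (w.take n) (wordTree_prefix_mem ht (w.drop n) _
    (by rw [List.cons_append, List.take_append_drop]; exact hw))

abbrev TT (children : V → List V) (u : V) (B : Finset V) : Type _ :=
  {t : Finset (List ℕ) // IsWordTree t ∧ ∀ w ∈ t, ∃ x ∈ B, vertexAt children u w = some x}

lemma asm_mem_tree {v : V} {A : Finset V}
    (f : ∀ i : Fin (children v).length,
      Option (TT children (children v)[i] (maxSubA children A (children v)[i]))) :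
    IsWordTree (asm _ fun i => ((f i).map Subtype.val).getD ∅) := by
  constructor
  · exact Finset.mem_insert_self _ _
  · intro w hw
    rw [mem_asm] at hw
    rcases hw with rfl | ⟨i, w', hw', rfl⟩
    · exact mem_asm.2 (Or.inl rfl)
    · rcases hfi : f i with _ | ti
      · rw [hfi] at hw'; simp at hw'
      · rw [hfi] at hw'
        simp only [Option.map_some, Option.getD_some] at hw'
        cases w' with
        | nil => exact mem_asm.2 (Or.inl rfl)
        | cons a w'' =>
          have : ((i : ℕ) :: a :: w'').dropLast = (i : ℕ) :: (a :: w'').dropLast := by simp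
          rw [this]
          refine mem_asm.2 (Or.inr ⟨i, (a :: w'').dropLast, ?_, rfl⟩)
          rw [hfi]
          simpa using ti.2.1.2 _ hw'

lemma asm_mem_emb {v : V} {A : Finset V} (hvA : v ∈ A)
    (f : ∀ i : Fin (children v).length,
      Option (TT children (children v)[i] (maxSubA children A (children v)[i])))
    {w : List ℕ} (hw : w ∈ asm _ fun i => ((f i).map Subtype.val).getD ∅) :
    ∃ x ∈ A, vertexAt children v w = some x := by
  rw [mem_asm] at hw
  rcases hw with rfl | ⟨i, w', hw', rfl⟩
  · exact ⟨v, hvA, rfl⟩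
  · rcases hfi : f i with _ | ti
    · rw [hfi] at hw'; simp at hw'
    · rw [hfi] at hw'
      simp only [Option.map_some, Option.getD_some] at hw'
      obtain ⟨x, hx, hvx⟩ := ti.2.2 _ hw'
      refine ⟨x, maxSubA_subset A _ hx, ?_⟩
      rw [vertexAt_cons, List.getElem?_eq_getElem i.2, Option.bind_some]
      exact hvx

noncomputable def EE {v : V} {A : Finset V} (hvA : v ∈ A) :
    TT children v A ≃
      ∀ i : Fin (children v).length,
        Option (TT children (children v)[i] (maxSubA children A (children v)[i])) where
  toFun t i :=
    if h : ((i : ℕ) :: []) ∈ t.1 then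
      some ⟨subT (i : ℕ) t.1, isWordTree_subT t.2.1 h,
        fun w hw => subT_emb t.2.1 t.2.2 i (mem_subT.mp hw)⟩
    else none
  invFun f := ⟨asm _ fun i => ((f i).map Subtype.val).getD ∅,
    asm_mem_tree f, fun w hw => asm_mem_emb hvA f hw⟩
  left_inv := by
    intro t
    apply Subtype.ext
    ext w
    rw [mem_asm]
    constructor
    · rintro (rfl | ⟨i, w', hw', rfl⟩)
      · exact t.2.1.1
      · beta_reduce at hw'
        by_cases h : ((i : ℕ) :: []) ∈ t.1
        · rw [dif_pos h] at hw'
          simp only [Option.map_some, Option.getD_some] at hw'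
          exact mem_subT.mp hw'
        · rw [dif_neg h] at hw'
          simp at hw'
    · intro hw
      cases w with
      | nil => exact Or.inl rfl
      | cons j w' =>
        obtain ⟨x, hx, hvx⟩ := t.2.2 _ hw
        rw [vertexAt_cons] at hvx
        have hj : j < (children v).length := by
          by_contra hle
          rw [List.getElem?_eq_none (le_of_not_gt hle)] at hvx
          simp at hvx
        have h1 : ((⟨j, hj⟩ : Fin (children v).length) : ℕ) :: [] ∈ t.1 :=
          wordTree_prefix_mem t.2.1 w' [j] hw
        refine Or.inr ⟨⟨j, hj⟩, w', ?_, rfl⟩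
        beta_reduce
        rw [dif_pos h1]
        simp only [Option.map_some, Option.getD_some]
        exact mem_subT.mpr hw
  right_inv := by
    intro f
    funext i
    rcases hfi : f i with _ | ti
    · beta_reduce
      rw [dif_neg]
      intro h
      rw [mem_asm] at h
      rcases h with h | ⟨j, w', hw', heq⟩
      · exact List.cons_ne_nil _ _ h
      · injection heq with h1 h2
        have hji : j = i := Fin.val_injective h1.symm
        subst hji
        subst h2
        rw [hfi] at hw'
        simp at hw'
    · have h1 : ((i : ℕ) :: []) ∈ (asm _ fun i => ((f i).map Subtype.val).getD ∅) := by
        refine mem_asm.2 (Or.inr ⟨i, [], ?_, rfl⟩)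
        rw [hfi]
        simpa using ti.2.1.1
      beta_reduce
      rw [dif_pos h1]
      congr 1
      apply Subtype.ext
      ext w
      rw [mem_subT, mem_asm]
      constructor
      · rintro (h | ⟨j, w', hw', heq⟩)
        · exact absurd h (List.cons_ne_nil _ _)
        · injection heq with hh ht'
          have hji : j = i := Fin.val_injective hh.symm
          subst hji
          subst ht'
          rw [hfi] at hw'
          simpa using hw'
      · intro hw
        refine Or.inr ⟨i, w, ?_, rfl⟩
        rw [hfi]
        simpa using hw

end Stmt19

open Stmt19 in
/-- The recursive decomposition of `Δ_v(A)` (the signed count of trees embeddable at `v`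
inside the animal `A`): `Δ_v(A) = 𝟙[|A|>0] ∏_{i=1}^d (1 - Δ_{v_i}(A^{v_i}))`, the product
running over the children `v₁,…,v_d` of `v` in the agreeable graph `G`. -/
theorem stmt19 {V : Type*} [DecidableEq V] (children : V → List V)
    (hnodup : ∀ v, (children v).Nodup)
    (hacyc : ∀ v : V, ¬ Relation.TransGen (fun a b => b ∈ children a) v v)
    (v : V) (A : Finset V)
    (hA : v ∈ A ∧ ∀ u ∈ A,
      Relation.ReflTransGen (fun a b => b ∈ A ∧ b ∈ children a) v u) :
    Delta children v A = (if A.Nonempty then (1:ℝ) else 0) *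
      ((children v).map (fun c => 1 - Delta children c (maxSubA children A c))).prod := by
  classical
  obtain ⟨hvA, -⟩ := hA
  rw [if_pos ⟨v, hvA⟩, one_mul]
  haveI I : ∀ (u : V) (B : Finset V), Fintype (TT children u B) :=
    fun u B => (emb_finite hacyc u B).fintype
  have hDelta : ∀ (u : V) (B : Finset V),
      Delta children u B = ∑ t : TT children u B, (-1 : ℝ) ^ (t.1.card + 1) := by
    intro u B
    rw [Delta]
    exact tsum_fintype _
  have hmap : ((children v).map fun c => 1 - Delta children c (maxSubA children A c)).prod
      = ∏ i : Fin (children v).length,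
          (1 - Delta children (children v)[i] (maxSubA children A (children v)[i])) := by
    rw [← List.ofFn_getElem_eq_map, List.prod_ofFn]
    simp only [Fin.getElem_fin]
  rw [hmap, hDelta]
  rw [← Equiv.sum_comp (EE hvA).symm
    (fun t : TT children v A => (-1 : ℝ) ^ (t.1.card + 1))]
  have hterm : ∀ f : ∀ i : Fin (children v).length,
      Option (TT children (children v)[i] (maxSubA children A (children v)[i])),
      (-1 : ℝ) ^ ((((EE (children := children) hvA).symm f).1.card) + 1)
        = ∏ i, (-1 : ℝ) ^ ((Option.map (fun t => t.1.card) (f i)).getD 0) := by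
    intro f
    have hc : (((EE (children := children) hvA).symm f)).1.card
        = 1 + ∑ i, ((Option.map Subtype.val (f i)).getD ∅).card := card_asm _
    have hm : ∀ i, ((Option.map Subtype.val (f i)).getD ∅).card
        = (Option.map (fun t => t.1.card) (f i)).getD 0 := by
      intro i
      cases f i <;> simp
    rw [hc]
    rw [show 1 + (∑ i, ((Option.map Subtype.val (f i)).getD ∅).card) + 1
        = (∑ i, ((Option.map Subtype.val (f i)).getD ∅).card) + 2 by omega]
    rw [pow_add, neg_one_sq, mul_one]
    rw [← Finset.prod_pow_eq_pow_sum]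
    exact Finset.prod_congr rfl fun i _ => by rw [hm i]
  rw [Finset.sum_congr rfl fun f _ => hterm f]
  have hswap := Fintype.prod_sum
    (κ := fun i : Fin (children v).length =>
      Option (TT children (children v)[i] (maxSubA children A (children v)[i])))
    (f := fun i o => (-1 : ℝ) ^ ((Option.map (fun t => t.1.card) o).getD 0))
  rw [← hswap]
  refine Finset.prod_congr rfl fun i _ => ?_
  rw [Fintype.sum_option, hDelta]
  simp only [Option.map_none, Option.getD_none, pow_zero, Option.map_some, Option.getD_some]
  have h2 : ∀ t : TT children (children v)[i] (maxSubA children A (children v)[i]),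
      (-1 : ℝ) ^ (t.1.card + 1) = -((-1 : ℝ) ^ t.1.card) := by
    intro t
    rw [pow_succ]
    ring
  rw [Finset.sum_congr rfl fun t _ => h2 t]
  rw [Finset.sum_neg_distrib, sub_neg_eq_add]
end
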